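/- arXiv:2310.04386 — 3 statements merged into one kernel-verified Lean document; each statement's English description precedes it below -/
import Mathlib

section
/- For alpha in (0,1/2), real t > 0, and xi > 0: Int_0^1 (1-x)^{alpha-1} * (xi+x)^{-alpha-1} dx = xi^{-alpha} / (alpha * (1+xi)). -/
/-! The integrand is an exact derivative: with `G x = (1 - x)^α (ξ + x)^(-α)`, the product rule gives
`G' x = -α (1 - x)^(α-1) (ξ + x)^(-α-1) ((ξ + x) + (1 - x)) = -α (1 + ξ) (1 - x)^(α-1) (ξ + x)^(-α-1)`,
so the integral is `(G 0 - G 1) / (α (1 + ξ)) = ξ^(-α) / (α (1 + ξ))`. -/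

open MeasureTheory Real

theorem hasDerivAt_one_sub_rpow_mul_add_rpow_neg {α ξ x : ℝ} (hx : x < 1) (hξx : 0 < ξ + x) :
    HasDerivAt (fun y => (1 - y) ^ α * (ξ + y) ^ (-α))
      (-(α * (1 + ξ)) * ((1 - x) ^ (α - 1) * (ξ + x) ^ (-α - 1))) x := by
  have h1x : 0 < 1 - x := by linarith
  have d1 : HasDerivAt (fun y => (1 - y) ^ α) (α * (1 - x) ^ (α - 1) * (-1)) x :=
    (hasDerivAt_rpow_const (Or.inl h1x.ne')).comp x ((hasDerivAt_id x).const_sub 1)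
  have d2 : HasDerivAt (fun y => (ξ + y) ^ (-α)) (-α * (ξ + x) ^ (-α - 1) * 1) x :=
    (hasDerivAt_rpow_const (Or.inl hξx.ne')).comp x ((hasDerivAt_id x).const_add ξ)
  refine (d1.mul d2).congr_deriv ?_
  rw [rpow_sub_one h1x.ne', rpow_sub_one hξx.ne']
  field_simp
  ring

theorem continuousOn_add_rpow_Icc {ξ : ℝ} (hξ : 0 < ξ) (β : ℝ) :
    ContinuousOn (fun x : ℝ => (ξ + x) ^ β) (Set.Icc 0 1) :=
  (continuousOn_const.add continuousOn_id).rpow_const fun _ hx =>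
    Or.inl (add_pos_of_pos_of_nonneg hξ hx.1).ne'

theorem intervalIntegrable_one_sub_rpow_mul_add_rpow {α ξ : ℝ} (hα : 0 < α) (hξ : 0 < ξ)
    (β : ℝ) : IntervalIntegrable (fun x => (1 - x) ^ (α - 1) * (ξ + x) ^ β) volume 0 1 := by
  have h : IntervalIntegrable (fun x : ℝ => (1 - x) ^ (α - 1)) volume 0 1 := by
    simpa using (intervalIntegral.intervalIntegrable_rpow' (a := 1) (b := 0)
      (r := α - 1) (by linarith)).comp_sub_left 1
  refine h.mul_continuousOn ?_
  rw [Set.uIcc_of_le zero_le_one]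
  exact continuousOn_add_rpow_Icc hξ β

theorem stmt4_general (α ξ : ℝ) (hα0 : 0 < α) (hξ : 0 < ξ) :
    ∫ x in (0:ℝ)..1, (1-x)^(α-1) * (ξ+x)^(-α-1) = ξ^(-α) / (α * (1+ξ)) := by
  have hcont : ContinuousOn (fun y => (1 - y) ^ α * (ξ + y) ^ (-α)) (Set.Icc 0 1) :=
    ((continuousOn_const.sub continuousOn_id).rpow_const fun _ _ => Or.inr hα0.le).mul
      (continuousOn_add_rpow_Icc hξ (-α))
  have hftc := intervalIntegral.integral_eq_sub_of_hasDerivAt_of_le zero_le_one hcont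
    (fun x hx => hasDerivAt_one_sub_rpow_mul_add_rpow_neg hx.2 (by linarith [hx.1]))
    ((intervalIntegrable_one_sub_rpow_mul_add_rpow hα0 hξ (-α - 1)).const_mul _)
  rw [intervalIntegral.integral_const_mul] at hftc
  simp only [sub_self, sub_zero, add_zero, zero_rpow hα0.ne', one_rpow, zero_mul, zero_sub,
    one_mul] at hftc
  have hc : α * (1 + ξ) ≠ 0 := by positivity
  field_simp
  linarith

theorem stmt4 (α t ξ : ℝ) (hα0 : 0 < α) (hα : α < 1/2) (ht : 0 < t) (hξ : 0 < ξ) :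
    ∫ x in (0:ℝ)..1, (1-x)^(α-1) * (ξ+x)^(-α-1) = ξ^(-α) / (α * (1+ξ)) :=
  stmt4_general α ξ hα0 hξ
end

section
/- Let (q_n) be a renewal sequence on the nonnegative integers with q_n ~ C_q * n^{alpha - 1} as n -> infinity, where C_q = 1/(Gamma(alpha)*Gamma(1-alpha)) and alpha in (0,1/2). Then for fixed reals u, v > 0, n^{1-2alpha} * sum_{r >= 0} q_{floor(u n) + r} * q_{floor(v n) + r} converges as n -> infinity to C_q^2 * Int_0^{infty} (y+u)^{alpha-1} * (y+v)^{alpha-1} dy. -/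
/-!
Substituting `y = r / n`, the normalised sum `n ^ (1 - 2α) * ∑ r, q (⌊u n⌋ + r) * q (⌊v n⌋ + r)` is
exactly the integral over `(0, ∞)` of the step function
`F n y = n ^ (1 - α) q (⌊u n⌋ + ⌊n y⌋) * n ^ (1 - α) q (⌊v n⌋ + ⌊n y⌋)`.
Since `q k * k ^ (1 - α) → C_q`, each factor tends to `C_q (y + u) ^ (α - 1)` (resp. `v`), and a
uniform bound `|q k| ≤ M (k + 1) ^ (α - 1)` dominates `F n` by `M² (y + min u v / 2) ^ (2α - 2)`,
which is integrable because `2α - 2 < -1`. Dominated convergence concludes.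
-/

open MeasureTheory Real Filter Set Topology Asymptotics

section NatFloor

variable {E : Type*} [NormedAddCommGroup E]

lemma integrableOn_Ico_natFloor (h : ℕ → E) (r : ℕ) :
    IntegrableOn (fun y : ℝ => h ⌊y⌋₊) (Ico (r : ℝ) (r + 1)) :=
  (integrableOn_const (by simp)).congr_fun
    (fun y hy => (congrArg h (Nat.floor_eq_on_Ico r y hy)).symm) measurableSet_Ico

variable [NormedSpace ℝ E] [CompleteSpace E]

lemma setIntegral_Ico_natFloor (h : ℕ → E) (r : ℕ) :
    ∫ y in Ico (r : ℝ) (r + 1), h ⌊y⌋₊ = h r := by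
  rw [setIntegral_congr_fun measurableSet_Ico fun y hy => congrArg h (Nat.floor_eq_on_Ico r y hy),
    setIntegral_const]
  simp [Real.volume_real_Ico]

lemma integral_Ici_natFloor_eq_tsum {h : ℕ → E}
    (hh : Summable fun r => ‖h r‖) :
    ∫ y in Ici (0 : ℝ), h ⌊y⌋₊ = ∑' r, h r := by
  have hunion : (⋃ r : ℕ, Ico (r : ℝ) (r + 1)) = Ici 0 := by
    ext y
    simp only [mem_iUnion, mem_Ico, mem_Ici]
    exact ⟨fun ⟨r, hr, _⟩ => (Nat.cast_nonneg r).trans hr,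
      fun hy => ⟨⌊y⌋₊, Nat.floor_le hy, Nat.lt_floor_add_one y⟩⟩
  have hdisj : Pairwise (Function.onFun Disjoint fun r : ℕ => Ico (r : ℝ) (r + 1)) :=
    fun i j hij => disjoint_left.2 fun y hi hj =>
      hij ((Nat.floor_eq_on_Ico i y hi).symm.trans (Nat.floor_eq_on_Ico j y hj))
  have hint : IntegrableOn (fun y : ℝ => h ⌊y⌋₊) (⋃ r : ℕ, Ico (r : ℝ) (r + 1)) :=
    integrableOn_iUnion_of_summable_integral_norm (integrableOn_Ico_natFloor h)
      (by simpa only [setIntegral_Ico_natFloor (fun r => ‖h r‖)] using hh)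
  rw [← hunion, integral_iUnion (fun _ => measurableSet_Ico) hdisj hint]
  exact tsum_congr (setIntegral_Ico_natFloor h)

lemma integral_Ioi_natFloor_mul_eq_tsum {h : ℕ → E}
    (hh : Summable fun r => ‖h r‖) {c : ℝ} (hc : 0 < c) :
    ∫ y in Ioi (0 : ℝ), h ⌊c * y⌋₊ = c⁻¹ • ∑' r, h r := by
  rw [integral_comp_mul_left_Ioi (fun y => h ⌊y⌋₊) 0 hc, mul_zero, ← integral_Ici_eq_integral_Ioi,
    integral_Ici_natFloor_eq_tsum hh]

end NatFloor

section

variable {q : ℕ → ℝ} {α c M : ℝ}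

lemma exists_abs_le_mul_add_one_rpow
    (hq : Tendsto (fun k : ℕ => q k * (k : ℝ) ^ (1 - α)) atTop (𝓝 c)) :
    ∃ M, ∀ k, |q k| ≤ M * ((k : ℝ) + 1) ^ (α - 1) := by
  have hratio : Tendsto (fun k : ℕ => (k : ℝ) ^ (α - 1) / ((k : ℝ) + 1) ^ (α - 1)) atTop (𝓝 1) := by
    have := ((tendsto_natCast_div_add_atTop (1 : ℝ)).rpow_const (p := α - 1) (Or.inl one_ne_zero))
    rw [one_rpow] at this
    refine this.congr fun k => ?_
    rw [div_rpow (Nat.cast_nonneg k) (by positivity)]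
  have hpow : (fun k : ℕ => (k : ℝ) ^ (α - 1)) =O[atTop] fun k => ((k : ℝ) + 1) ^ (α - 1) :=
    isBigO_of_div_tendsto_nhds (Eventually.of_forall fun k hk => absurd hk (by positivity)) 1 hratio
  have hbig : q =O[atTop] fun k => ((k : ℝ) + 1) ^ (α - 1) := by
    refine ((hq.isBigO_one ℝ).mul hpow).congr' ?_ (Eventually.of_forall fun _ => one_mul _)
    filter_upwards [eventually_ne_atTop 0] with k hk
    rw [mul_assoc, ← rpow_add (by positivity)]
    simp
  obtain ⟨M, hM⟩ := (isBigO_nat_atTop_iff fun k hk => absurd hk (by positivity)).1 hbig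
  refine ⟨M, fun k => ?_⟩
  simpa [abs_of_pos (show (0:ℝ) < ((k : ℝ) + 1) ^ (α - 1) by positivity)] using hM k

lemma tendsto_rpow_mul_comp_of_tendsto_div {s : ℕ → ℕ} {L : ℝ}
    (hq : Tendsto (fun k : ℕ => q k * (k : ℝ) ^ (1 - α)) atTop (𝓝 c))
    (hs : Tendsto (fun n : ℕ => (s n : ℝ) / n) atTop (𝓝 L)) (hL : 0 < L) :
    Tendsto (fun n : ℕ => (n : ℝ) ^ (1 - α) * q (s n)) atTop (𝓝 (c * L ^ (α - 1))) := by
  have hs_top : Tendsto s atTop atTop := by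
    refine tendsto_natCast_atTop_iff.1 ((hs.pos_mul_atTop hL tendsto_natCast_atTop_atTop).congr' ?_)
    filter_upwards [eventually_ne_atTop 0] with n hn
    field_simp
  refine ((hq.comp hs_top).mul (hs.rpow_const (Or.inl hL.ne'))).congr' ?_
  filter_upwards [eventually_ne_atTop 0, hs_top.eventually_ne_atTop 0] with n hn hsn
  have hn' : (0 : ℝ) < n := by positivity
  have hsn' : (0 : ℝ) < s n := by positivity
  simp only [Function.comp_apply]
  rw [div_rpow hsn'.le hn'.le, mul_comm _ (q (s n)), mul_assoc, mul_div_assoc', ← rpow_add hsn',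
    show (1 : ℝ) - α + (α - 1) = 0 by ring, rpow_zero, one_div, ← rpow_neg hn'.le, neg_sub]

lemma tendsto_natFloor_mul_add_natFloor_div {w y : ℝ} (hw : 0 ≤ w) (hy : 0 ≤ y) :
    Tendsto (fun n : ℕ => ((⌊w * n⌋₊ + ⌊n * y⌋₊ : ℕ) : ℝ) / n) atTop (𝓝 (w + y)) := by
  have hfloor : ∀ a : ℝ, 0 ≤ a → Tendsto (fun n : ℕ => (⌊a * n⌋₊ : ℝ) / n) atTop (𝓝 a) :=
    fun a ha => (tendsto_nat_floor_mul_div_atTop ha).comp tendsto_natCast_atTop_atTop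
  refine ((hfloor w hw).add (hfloor y hy)).congr fun n => ?_
  simp only [Nat.cast_add, add_div, mul_comm y]

lemma abs_rpow_mul_natFloor_add_natFloor_le (hM : ∀ k, |q k| ≤ M * ((k : ℝ) + 1) ^ (α - 1))
    (hα : α ≤ 1) {m w y : ℝ} {n : ℕ} (hm : 0 < m) (hmw : 2 * m ≤ w) (hwn : 1 ≤ w * n)
    (hy : 0 ≤ y) :
    |(n : ℝ) ^ (1 - α) * q (⌊w * n⌋₊ + ⌊n * y⌋₊)| ≤ M * (y + m) ^ (α - 1) := by
  have hn : (0 : ℝ) < n := by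
    rcases Nat.eq_zero_or_pos n with rfl | h
    · norm_num at hwn
    · exact_mod_cast h
  have hM0 : 0 ≤ M := by simpa using (abs_nonneg (q 0)).trans (hM 0)
  have hw_floor : w * n / 2 ≤ ⌊w * n⌋₊ := by
    have h1 : (1 : ℝ) ≤ ⌊w * n⌋₊ := by exact_mod_cast Nat.one_le_floor_iff _ |>.2 hwn
    linarith [Nat.lt_floor_add_one (w * n)]
  have hlower : n * (y + m) ≤ ((⌊w * n⌋₊ + ⌊n * y⌋₊ : ℕ) : ℝ) + 1 := by
    push_cast
    nlinarith [Nat.lt_floor_add_one (n * y)]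
  rw [abs_mul, abs_of_pos (by positivity)]
  calc (n : ℝ) ^ (1 - α) * |q (⌊w * n⌋₊ + ⌊n * y⌋₊)|
      ≤ n ^ (1 - α) * (M * (n * (y + m)) ^ (α - 1)) := by
        refine mul_le_mul_of_nonneg_left ((hM _).trans (mul_le_mul_of_nonneg_left ?_ hM0))
          (by positivity)
        exact rpow_le_rpow_of_nonpos (by positivity) hlower (by linarith)
    _ = M * (y + m) ^ (α - 1) := by
        have hcancel : (n : ℝ) ^ (1 - α) * (n : ℝ) ^ (α - 1) = 1 := by
          rw [← rpow_add hn]; simp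
        rw [mul_rpow hn.le (by positivity)]
        linear_combination (M * (y + m) ^ (α - 1)) * hcancel

lemma abs_rescaled_mul_rescaled_le (hM : ∀ k, |q k| ≤ M * ((k : ℝ) + 1) ^ (α - 1))
    (hα : α ≤ 1) {u v y : ℝ} {n : ℕ} (hu : 0 < u) (hv : 0 < v) (hn : max (1 / u) (1 / v) ≤ n)
    (hy : 0 ≤ y) :
    |((n : ℝ) ^ (1 - α) * q (⌊u * n⌋₊ + ⌊n * y⌋₊)) * ((n : ℝ) ^ (1 - α) * q (⌊v * n⌋₊ + ⌊n * y⌋₊))|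
      ≤ M ^ 2 * (y + min u v / 2) ^ (2 * (α - 1)) := by
  have hm : 0 < min u v / 2 := by positivity
  have hfac : ∀ {w}, 0 < w → min u v ≤ w → 1 / w ≤ n →
      |(n : ℝ) ^ (1 - α) * q (⌊w * n⌋₊ + ⌊n * y⌋₊)| ≤ M * (y + min u v / 2) ^ (α - 1) :=
    fun hw hmw hwn => abs_rpow_mul_natFloor_add_natFloor_le hM hα hm (by linarith)
      ((div_le_iff₀' hw).1 hwn) hy
  have hbu := hfac hu (min_le_left u v) (le_of_max_le_left hn)
  have hbv := hfac hv (min_le_right u v) (le_of_max_le_right hn)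
  rw [abs_mul, two_mul, rpow_add (by positivity)]
  calc _ ≤ (M * (y + min u v / 2) ^ (α - 1)) * (M * (y + min u v / 2) ^ (α - 1)) :=
        mul_le_mul hbu hbv (abs_nonneg _) ((abs_nonneg _).trans hbu)
    _ = _ := by ring

lemma summable_norm_mul_shift (hM : ∀ k, |q k| ≤ M * ((k : ℝ) + 1) ^ (α - 1)) (hα : α < 1 / 2)
    (a b : ℕ) : Summable fun r => ‖q (a + r) * q (b + r)‖ := by
  have hM0 : 0 ≤ M := by simpa using (abs_nonneg (q 0)).trans (hM 0)
  have hshift : ∀ a r : ℕ, |q (a + r)| ≤ M * ((r : ℝ) + 1) ^ (α - 1) := fun a r =>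
    (hM _).trans (mul_le_mul_of_nonneg_left
      (rpow_le_rpow_of_nonpos (by positivity)
        (by push_cast; linarith [(Nat.cast_nonneg a : (0 : ℝ) ≤ a)]) (by linarith)) hM0)
  have hmajor : Summable fun r : ℕ => M ^ 2 * ((r : ℝ) + 1) ^ (2 * (α - 1)) := by
    refine Summable.mul_left _ ?_
    have := (summable_nat_add_iff 1).2 (summable_nat_rpow.2 (show 2 * (α - 1) < -1 by linarith))
    exact_mod_cast this
  refine Summable.of_nonneg_of_le (fun _ => norm_nonneg _) (fun r => ?_) hmajor
  rw [norm_mul, Real.norm_eq_abs, Real.norm_eq_abs, two_mul, rpow_add (by positivity)]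
  calc |q (a + r)| * |q (b + r)|
      ≤ (M * ((r : ℝ) + 1) ^ (α - 1)) * (M * ((r : ℝ) + 1) ^ (α - 1)) :=
        mul_le_mul (hshift a r) (hshift b r) (abs_nonneg _) (by positivity)
    _ = M ^ 2 * (((r : ℝ) + 1) ^ (α - 1) * ((r : ℝ) + 1) ^ (α - 1)) := by ring

lemma integral_Ioi_rescaled_eq_rpow_mul_tsum {a b n : ℕ}
    (hsum : Summable fun r => ‖q (a + r) * q (b + r)‖) (hn : n ≠ 0) :
    ∫ y in Ioi (0 : ℝ),
        ((n : ℝ) ^ (1 - α) * q (a + ⌊n * y⌋₊)) * ((n : ℝ) ^ (1 - α) * q (b + ⌊n * y⌋₊))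
      = (n : ℝ) ^ (1 - 2 * α) * ∑' r, q (a + r) * q (b + r) := by
  have hn' : (0 : ℝ) < n := by positivity
  have hpow : (n : ℝ) ^ (1 - α) * (n : ℝ) ^ (1 - α) * (n : ℝ)⁻¹ = (n : ℝ) ^ (1 - 2 * α) := by
    rw [← rpow_add hn', ← rpow_neg_one, ← rpow_add hn']
    ring_nf
  simp_rw [mul_mul_mul_comm _ (q _)]
  rw [integral_const_mul, integral_Ioi_natFloor_mul_eq_tsum hsum hn', smul_eq_mul, ← mul_assoc,
    hpow]

theorem tendsto_rpow_mul_tsum_mul_natFloor_shift {u v : ℝ} (hα : α < 1 / 2)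
    (hq : Tendsto (fun k : ℕ => q k * (k : ℝ) ^ (1 - α)) atTop (𝓝 c)) (hu : 0 < u) (hv : 0 < v) :
    Tendsto (fun n : ℕ => (n : ℝ) ^ (1 - 2 * α) * ∑' r, q (⌊u * n⌋₊ + r) * q (⌊v * n⌋₊ + r))
      atTop (𝓝 (c ^ 2 * ∫ y in Ioi (0 : ℝ), (y + u) ^ (α - 1) * (y + v) ^ (α - 1))) := by
  obtain ⟨M, hM⟩ := exists_abs_le_mul_add_one_rpow hq
  set F : ℕ → ℝ → ℝ := fun n y =>
    ((n : ℝ) ^ (1 - α) * q (⌊u * n⌋₊ + ⌊n * y⌋₊)) * ((n : ℝ) ^ (1 - α) * q (⌊v * n⌋₊ + ⌊n * y⌋₊))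
  have hF_eq : (fun n => ∫ y in Ioi (0 : ℝ), F n y) =ᶠ[atTop]
      fun n : ℕ => (n : ℝ) ^ (1 - 2 * α) * ∑' r, q (⌊u * n⌋₊ + r) * q (⌊v * n⌋₊ + r) := by
    filter_upwards [eventually_ne_atTop 0] with n hn
    exact integral_Ioi_rescaled_eq_rpow_mul_tsum (summable_norm_mul_shift hM hα _ _) hn
  have hF_meas : ∀ n, AEStronglyMeasurable (F n) (volume.restrict (Ioi 0)) := fun n => by
    have hfloor : Measurable fun y : ℝ => ⌊(n : ℝ) * y⌋₊ :=
      Nat.measurable_floor.comp (measurable_const_mul _)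
    exact ((measurable_from_nat (f := fun k => ((n : ℝ) ^ (1 - α) * q (⌊u * n⌋₊ + k)) *
      ((n : ℝ) ^ (1 - α) * q (⌊v * n⌋₊ + k)))).comp hfloor).aestronglyMeasurable
  have hfactor_lim : ∀ {w y : ℝ}, 0 < w → 0 ≤ y →
      Tendsto (fun n : ℕ => (n : ℝ) ^ (1 - α) * q (⌊w * n⌋₊ + ⌊n * y⌋₊)) atTop
        (𝓝 (c * (y + w) ^ (α - 1))) := fun hw hy => by
    rw [add_comm]
    exact tendsto_rpow_mul_comp_of_tendsto_div hq
      (tendsto_natFloor_mul_add_natFloor_div hw.le hy) (by positivity)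
  set m := min u v / 2
  have hF_le : ∀ᶠ n in atTop, ∀ᵐ y ∂volume.restrict (Ioi 0),
      ‖F n y‖ ≤ M ^ 2 * (y + m) ^ (2 * (α - 1)) := by
    filter_upwards [tendsto_natCast_atTop_atTop.eventually_ge_atTop (max (1 / u) (1 / v))] with n hn
    filter_upwards [ae_restrict_mem measurableSet_Ioi] with y (hy : 0 < y)
    exact abs_rescaled_mul_rescaled_le hM (by linarith) hu hv hn hy.le
  have hint : Integrable (fun y => M ^ 2 * (y + m) ^ (2 * (α - 1))) (volume.restrict (Ioi 0)) :=
    (integrableOn_add_rpow_Ioi_of_lt (by linarith) (neg_neg_of_pos (by positivity))).const_mul _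
  have hlim : ∀ᵐ y ∂volume.restrict (Ioi 0),
      Tendsto (F · y) atTop (𝓝 (c * (y + u) ^ (α - 1) * (c * (y + v) ^ (α - 1)))) := by
    filter_upwards [ae_restrict_mem measurableSet_Ioi] with y (hy : 0 < y)
    exact (hfactor_lim hu (le_of_lt hy)).mul (hfactor_lim hv (le_of_lt hy))
  have hlimit : ∫ y in Ioi (0 : ℝ), c * (y + u) ^ (α - 1) * (c * (y + v) ^ (α - 1))
      = c ^ 2 * ∫ y in Ioi (0 : ℝ), (y + u) ^ (α - 1) * (y + v) ^ (α - 1) := by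
    rw [← integral_const_mul]
    congr 1 with y
    ring
  rw [← hlimit]
  exact (tendsto_integral_filter_of_dominated_convergence _ (.of_forall hF_meas) hF_le hint
    hlim).congr' hF_eq

end

theorem stmt11_general (α : ℝ) (hα : α < 1/2) (q : ℕ → ℝ)
    (hq : Tendsto (fun n : ℕ => q n * (Real.Gamma α * Real.Gamma (1-α)) * (n:ℝ)^(1-α))
      atTop (nhds 1))
    (u v : ℝ) (hu : 0 < u) (hv : 0 < v) :
    Tendsto (fun n : ℕ => (n:ℝ)^(1-2*α) * ∑' r : ℕ, q (⌊u*n⌋₊ + r) * q (⌊v*n⌋₊ + r))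
      atTop
      (nhds ((1/(Real.Gamma α * Real.Gamma (1-α)))^(2:ℕ) *
        ∫ y in Set.Ioi (0:ℝ), (y+u)^(α-1)*(y+v)^(α-1))) := by
  set C := Real.Gamma α * Real.Gamma (1 - α)
  have hC : C ≠ 0 := fun hC => by
    simp only [hC, mul_zero, zero_mul] at hq
    exact zero_ne_one (tendsto_nhds_unique tendsto_const_nhds hq)
  have hq' : Tendsto (fun k : ℕ => q k * (k : ℝ) ^ (1 - α)) atTop (𝓝 (1 / C)) :=
    (hq.div_const C).congr fun k => by field_simp
  exact tendsto_rpow_mul_tsum_mul_natFloor_shift hα hq' hu hv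

theorem stmt11 (α : ℝ) (hα0 : 0 < α) (hα : α < 1/2) (q : ℕ → ℝ)
    (hq : Tendsto (fun n : ℕ => q n * (Real.Gamma α * Real.Gamma (1-α)) * (n:ℝ)^(1-α))
      atTop (nhds 1))
    (u v : ℝ) (hu : 0 < u) (hv : 0 < v) :
    Tendsto (fun n : ℕ => (n:ℝ)^(1-2*α) * ∑' r : ℕ, q (⌊u*n⌋₊ + r) * q (⌊v*n⌋₊ + r))
      atTop
      (nhds ((1/(Real.Gamma α * Real.Gamma (1-α)))^(2:ℕ) *
        ∫ y in Set.Ioi (0:ℝ), (y+u)^(α-1)*(y+v)^(α-1))) :=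
  stmt11_general α hα q hq u v hu hv
end

section
/- Let N i.i.d. standard normal random variables Z_1, ..., Z_N be given with N = floor(e^t), and let r > 0. For C = sqrt(2)*r and a_t = -t^{H-1/2} * log(t) * c/(2*sqrt(2)) (for any constant c > 0 and H in (1/2,1)), the tail probability satisfies P( r * t^H * Z_1 > C * t^{H+1/2} + a_t ) * e^t converges to a positive constant as t -> infinity; that is, P(Z_1 > sqrt(2 t) + a_t/(r t^H)) ~ (1/sqrt(4 pi)) * e^{-t} * (1+o(1)) up to the stated correction. -/
/-!
The threshold simplifies to `x_t = √(2t) (1 - log t / (4t))`, so that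
`x_t² / 2 = t - (log t) / 2 + (log t)² / (16 t)`. Since `y ↦ -e^{-y²/2} p(y)` has derivative
`e^{-y²/2} (y p(y) - p'(y))`, the choices `p = 1/y` and `p = 1/y - 1/y³` give
`e^{-x²/2} (1/x - 1/x³) ≤ ∫_x^∞ e^{-y²/2} dy ≤ e^{-x²/2} / x`, hence Mills' ratio
`∫_x^∞ e^{-y²/2} dy ∼ e^{-x²/2} / x`. Therefore
`e^t P(Z > x_t) ∼ e^{t - x_t²/2} / (√(2π) x_t) ∼ √t / (√(2π) √(2t)) = 1 / √(4π)`.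
-/

open MeasureTheory ProbabilityTheory Real Filter Set Topology

noncomputable def gaussianTail (x : ℝ) : ℝ := ∫ y in Ioi x, exp (-(y ^ 2 / 2))

lemma integrableOn_Ioi_exp_neg_sq_div_two (x : ℝ) :
    IntegrableOn (fun y => exp (-(y ^ 2 / 2))) (Ioi x) := by
  have h : Integrable (fun y : ℝ => exp (-(1 / 2 : ℝ) * y ^ 2)) :=
    integrable_exp_neg_mul_sq (by norm_num)
  refine (h.congr (Eventually.of_forall fun y => ?_)).integrableOn
  ring_nf

lemma gaussianReal_Ioi_toReal (x : ℝ) :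
    (gaussianReal 0 1 (Ioi x)).toReal = (√(2 * π))⁻¹ * gaussianTail x := by
  rw [gaussianReal_apply_eq_integral 0 one_ne_zero, ENNReal.toReal_ofReal
    (setIntegral_nonneg measurableSet_Ioi fun y _ => gaussianPDFReal_nonneg _ _ _),
    gaussianTail, ← integral_const_mul]
  simp [gaussianPDFReal, neg_div]

lemma tendsto_exp_neg_sq_div_two : Tendsto (fun y : ℝ => exp (-(y ^ 2 / 2))) atTop (𝓝 0) :=
  tendsto_exp_atBot.comp <| tendsto_neg_atTop_atBot.comp <|
    (tendsto_pow_atTop two_ne_zero).atTop_div_const two_pos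

section GaussianTailBounds

variable {p p' : ℝ → ℝ} {a : ℝ}

lemma hasDerivAt_neg_exp_mul {y : ℝ} (hp : HasDerivAt p (p' y) y) :
    HasDerivAt (fun y => -exp (-(y ^ 2 / 2)) * p y) (exp (-(y ^ 2 / 2)) * (y * p y - p' y)) y := by
  have hexp : HasDerivAt (fun y : ℝ => exp (-(y ^ 2 / 2))) (-y * exp (-(y ^ 2 / 2))) y := by
    convert ((hasDerivAt_pow 2 y).div_const 2).fun_neg.exp using 1
    push_cast
    ring
  exact (hexp.fun_neg.fun_mul hp).congr_deriv (by ring)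

lemma tendsto_neg_exp_mul (hp0 : Tendsto p atTop (𝓝 0)) :
    Tendsto (fun y => -exp (-(y ^ 2 / 2)) * p y) atTop (𝓝 0) := by
  simpa using tendsto_exp_neg_sq_div_two.neg.mul hp0

lemma integrableOn_exp_mul_sub (hp : ∀ y ∈ Ici a, HasDerivAt p (p' y) y)
    (hp0 : Tendsto p atTop (𝓝 0)) (h0 : ∀ y ∈ Ioi a, 0 ≤ y * p y - p' y) :
    IntegrableOn (fun y => exp (-(y ^ 2 / 2)) * (y * p y - p' y)) (Ioi a) :=
  integrableOn_Ioi_deriv_of_nonneg' (fun y hy => hasDerivAt_neg_exp_mul (hp y hy))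
    (fun y hy => mul_nonneg (exp_nonneg _) (h0 y hy)) (tendsto_neg_exp_mul hp0)

lemma integral_exp_mul_sub (hp : ∀ y ∈ Ici a, HasDerivAt p (p' y) y)
    (hp0 : Tendsto p atTop (𝓝 0)) (h0 : ∀ y ∈ Ioi a, 0 ≤ y * p y - p' y) :
    ∫ y in Ioi a, exp (-(y ^ 2 / 2)) * (y * p y - p' y) = exp (-(a ^ 2 / 2)) * p a := by
  rw [integral_Ioi_of_hasDerivAt_of_nonneg' (fun y hy => hasDerivAt_neg_exp_mul (hp y hy))
    (fun y hy => mul_nonneg (exp_nonneg _) (h0 y hy)) (tendsto_neg_exp_mul hp0)]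
  ring

lemma gaussianTail_le_of_hasDerivAt (hp : ∀ y ∈ Ici a, HasDerivAt p (p' y) y)
    (hp0 : Tendsto p atTop (𝓝 0)) (h1 : ∀ y ∈ Ioi a, 1 ≤ y * p y - p' y) :
    gaussianTail a ≤ exp (-(a ^ 2 / 2)) * p a := by
  have h0 : ∀ y ∈ Ioi a, 0 ≤ y * p y - p' y := fun y hy => zero_le_one.trans (h1 y hy)
  rw [← integral_exp_mul_sub hp hp0 h0]
  exact setIntegral_mono_on (integrableOn_Ioi_exp_neg_sq_div_two a)
    (integrableOn_exp_mul_sub hp hp0 h0) measurableSet_Ioi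
    fun y hy => le_mul_of_one_le_right (exp_nonneg _) (h1 y hy)

lemma le_gaussianTail_of_hasDerivAt (hp : ∀ y ∈ Ici a, HasDerivAt p (p' y) y)
    (hp0 : Tendsto p atTop (𝓝 0)) (h0 : ∀ y ∈ Ioi a, 0 ≤ y * p y - p' y)
    (h1 : ∀ y ∈ Ioi a, y * p y - p' y ≤ 1) :
    exp (-(a ^ 2 / 2)) * p a ≤ gaussianTail a := by
  rw [← integral_exp_mul_sub hp hp0 h0]
  exact setIntegral_mono_on (integrableOn_exp_mul_sub hp hp0 h0)
    (integrableOn_Ioi_exp_neg_sq_div_two a) measurableSet_Ioi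
    fun y hy => mul_le_of_le_one_right (exp_nonneg _) (h1 y hy)

end GaussianTailBounds

lemma gaussianTail_le {x : ℝ} (hx : 0 < x) : gaussianTail x ≤ exp (-(x ^ 2 / 2)) / x := by
  refine gaussianTail_le_of_hasDerivAt (p' := fun y => -(y ^ 2)⁻¹)
    (fun y hy => hasDerivAt_inv (hx.trans_le hy).ne') tendsto_inv_atTop_zero fun y hy => ?_
  have hy : 0 < y := hx.trans hy
  rw [mul_inv_cancel₀ hy.ne', sub_neg_eq_add, le_add_iff_nonneg_right]
  positivity

lemma le_gaussianTail {x : ℝ} (hx : 2 ≤ x) :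
    exp (-(x ^ 2 / 2)) * (x⁻¹ - (x ^ 3)⁻¹) ≤ gaussianTail x := by
  have hpos : ∀ y ∈ Ici x, 0 < y := fun y hy => by linarith [mem_Ici.mp hy]
  have hp : ∀ y ∈ Ici x, HasDerivAt (fun y : ℝ => y⁻¹ - (y ^ 3)⁻¹)
      (-(y ^ 2)⁻¹ + 3 * (y ^ 4)⁻¹) y := fun y hy => by
    have hy : y ≠ 0 := (hpos y hy).ne'
    refine ((hasDerivAt_inv hy).sub ((hasDerivAt_pow 3 y).inv (pow_ne_zero 3 hy))).congr_deriv ?_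
    field_simp
    ring
  have hp0 : Tendsto (fun y : ℝ => y⁻¹ - (y ^ 3)⁻¹) atTop (𝓝 0) := by
    simpa using (tendsto_inv_atTop_zero (𝕜 := ℝ)).sub
      (tendsto_inv_atTop_zero.comp (tendsto_pow_atTop three_ne_zero))
  have hcoeff : ∀ y ∈ Ioi x, y * (y⁻¹ - (y ^ 3)⁻¹) - (-(y ^ 2)⁻¹ + 3 * (y ^ 4)⁻¹)
      = 1 - 3 / y ^ 4 := fun y hy => by
    field_simp [(hpos y (mem_Ici.mpr hy.le)).ne']
    ring
  refine le_gaussianTail_of_hasDerivAt hp hp0 (fun y hy => ?_) (fun y hy => ?_)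
  · rw [hcoeff y hy, sub_nonneg, div_le_one (pow_pos (hpos y (mem_Ici.mpr hy.le)) 4)]
    nlinarith [pow_le_pow_left₀ zero_le_two (hx.trans hy.le) 4]
  · rw [hcoeff y hy, sub_le_self_iff]
    exact div_nonneg zero_le_three (pow_nonneg (hpos y (mem_Ici.mpr hy.le)).le 4)

theorem tendsto_mul_exp_mul_gaussianTail :
    Tendsto (fun x => x * exp (x ^ 2 / 2) * gaussianTail x) atTop (𝓝 1) := by
  have hlow : Tendsto (fun x : ℝ => 1 - (x ^ 2)⁻¹) atTop (𝓝 1) := by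
    simpa using (tendsto_const_nhds (x := (1 : ℝ))).sub
      (tendsto_inv_atTop_zero.comp (tendsto_pow_atTop two_ne_zero))
  refine tendsto_of_tendsto_of_tendsto_of_le_of_le' hlow tendsto_const_nhds ?_ ?_
  · filter_upwards [eventually_ge_atTop 2] with x hx
    calc 1 - (x ^ 2)⁻¹
        = x * exp (x ^ 2 / 2) * (exp (-(x ^ 2 / 2)) * (x⁻¹ - (x ^ 3)⁻¹)) := by
          rw [exp_neg]; field_simp
      _ ≤ _ := by gcongr; exact le_gaussianTail hx
  · filter_upwards [eventually_gt_atTop 0] with x hx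
    calc x * exp (x ^ 2 / 2) * gaussianTail x
        ≤ x * exp (x ^ 2 / 2) * (exp (-(x ^ 2 / 2)) / x) := by gcongr; exact gaussianTail_le hx
      _ = 1 := by rw [exp_neg]; field_simp

/-- The threshold `√(2t) + a_t / (r t^H)` of the statement, where `c = r`. -/
noncomputable def gaussianThreshold (t : ℝ) : ℝ := √2 * √t * (1 - log t / (4 * t))

lemma sqrt_two_mul_add_eq_gaussianThreshold (H : ℝ) {r t : ℝ} (hr : r ≠ 0) (ht : 0 < t) :
    √(2 * t) + (-(t ^ (H - 1 / 2)) * log t * r / (2 * √2)) / (r * t ^ H) =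
      gaussianThreshold t := by
  have hpow : t ^ H = t ^ (H - 1 / 2) * √t := by
    rw [sqrt_eq_rpow, ← rpow_add ht]
    norm_num
  have htH : 0 < t ^ (H - 1 / 2) := rpow_pos_of_pos ht _
  have hst : 0 < √t := sqrt_pos.mpr ht
  have h2 : 0 < √2 := by positivity
  rw [gaussianThreshold, hpow, sqrt_mul zero_le_two]
  field_simp
  rw [sq_sqrt zero_le_two, sq_sqrt ht.le]
  ring

lemma exp_eq_exp_gaussianThreshold_sq {t : ℝ} (ht : 0 < t) :
    exp t = exp (gaussianThreshold t ^ 2 / 2) * √t * exp (-(log t ^ 2 / (16 * t))) := by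
  have hsqrt : √t = exp (log t / 2) := by
    rw [← exp_log (sqrt_pos.mpr ht), log_sqrt ht.le]
  rw [hsqrt, ← exp_add, ← exp_add, gaussianThreshold, mul_pow, mul_pow, sq_sqrt zero_le_two,
    sq_sqrt ht.le]
  congr 1
  field_simp
  ring

lemma tendsto_one_sub_log_div_atTop : Tendsto (fun t => 1 - log t / (4 * t)) atTop (𝓝 1) := by
  simpa using (tendsto_const_nhds (x := (1 : ℝ))).sub
    (tendsto_pow_log_div_mul_add_atTop 4 0 1 four_ne_zero)

lemma tendsto_gaussianThreshold_atTop : Tendsto gaussianThreshold atTop atTop := by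
  have h := tendsto_sqrt_atTop.atTop_mul_pos (by positivity : (0 : ℝ) < √2 * 1)
    (tendsto_one_sub_log_div_atTop.const_mul √2)
  refine h.congr fun t => ?_
  rw [gaussianThreshold]
  ring

theorem tendsto_exp_mul_gaussianTail_gaussianThreshold :
    Tendsto (fun t => exp t * gaussianTail (gaussianThreshold t)) atTop (𝓝 (√2)⁻¹) := by
  have hmills := tendsto_mul_exp_mul_gaussianTail.comp tendsto_gaussianThreshold_atTop
  have hcorr : Tendsto (fun t => exp (-(log t ^ 2 / (16 * t)))) atTop (𝓝 1) := by
    have h := (tendsto_pow_log_div_mul_add_atTop 16 0 2 (by norm_num)).neg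
    simp only [add_zero, neg_zero] at h
    exact tendsto_exp_nhds_zero_nhds_one.comp h
  have h := hmills.mul (hcorr.div (tendsto_one_sub_log_div_atTop.const_mul √2) (by positivity))
  rw [one_mul, mul_one, one_div] at h
  refine h.congr' ?_
  filter_upwards [eventually_gt_atTop 0, tendsto_gaussianThreshold_atTop.eventually_gt_atTop 0]
    with t ht hpos
  have hst : 0 < √t := sqrt_pos.mpr ht
  have hfactor : √2 * (1 - log t / (4 * t)) = gaussianThreshold t / √t := by
    rw [gaussianThreshold]
    field_simp
  rw [Function.comp_apply, Pi.div_apply, hfactor, exp_eq_exp_gaussianThreshold_sq ht]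
  field_simp

theorem stmt14_general (H r : ℝ) (hr : 0 < r) :
    Tendsto (fun t : ℝ =>
      Real.exp t * (gaussianReal 0 1 (Set.Ioi (Real.sqrt (2*t) +
        (-(t^(H-1/2)) * Real.log t * r / (2*Real.sqrt 2)) / (r * t^H)))).toReal)
      atTop (nhds (1/Real.sqrt (4*π))) := by
  have hconst : (√(2 * π))⁻¹ * (√2)⁻¹ = 1 / √(4 * π) := by
    rw [← mul_inv, ← sqrt_mul (by positivity), one_div]
    ring_nf
  have h := tendsto_exp_mul_gaussianTail_gaussianThreshold.const_mul (√(2 * π))⁻¹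
  rw [hconst] at h
  refine h.congr' ?_
  filter_upwards [eventually_gt_atTop 0] with t ht
  rw [sqrt_two_mul_add_eq_gaussianThreshold H hr.ne' ht, gaussianReal_Ioi_toReal]
  ring

theorem stmt14 (H r : ℝ) (hH : 1/2 < H) (hH1 : H < 1) (hr : 0 < r) :
    Tendsto (fun t : ℝ =>
      Real.exp t * (gaussianReal 0 1 (Set.Ioi (Real.sqrt (2*t) +
        (-(t^(H-1/2)) * Real.log t * r / (2*Real.sqrt 2)) / (r * t^H)))).toReal)
      atTop (nhds (1/Real.sqrt (4*π))) :=
  stmt14_general H r hr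
end
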